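/- arXiv:1311.3529 — 2 statements merged into one kernel-verified Lean document; each statement's English description precedes it below -/
import Mathlib

section
/- Let 𝒥 be a nonempty family of 𝓕-measurable functions Ω → (−∞,∞] that is directed downwards, i.e. for all J₁, J₂ ∈ 𝒥 there exists J₃ ∈ 𝒥 with J₃ ≤ min(J₁, J₂) P-a.s. Assume each J ∈ 𝒥 has integrable negative part (so E_P[J] ∈ (−∞,∞] is well defined) and that there exists J₀ ∈ 𝒥 with E_P[J₀] < ∞. Then there exists a sequence (J_n) in 𝒥 which is P-a.s. nonincreasing such that its P-a.s. pointwise limit h satisfies: (i) h ≤ J P-a.s. for every J ∈ 𝒥; (ii) every 𝓕-measurable extended-real h′ with h′ ≤ J P-a.s. for all J ∈ 𝒥 satisfies h′ ≤ h P-a.s.; and (iii) E_P[h] = inf_{J ∈ 𝒥} E_P[J], where E_P[h] ∈ [−∞,∞) is well defined since h⁺ ≤ J₀⁺ up to a null set after replacing J₀ by a member below it. -/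
open MeasureTheory Filter

/-- The positive part of an extended real, as an extended nonnegative real. -/
noncomputable def posE (x : EReal) : ENNReal :=
  if x = ⊤ then ⊤ else ENNReal.ofReal x.toReal

/-- The extended expectation `E_P[X] ∈ [−∞,∞]` of an extended-real random variable:
lintegral of the positive part minus lintegral of the negative part. -/
noncomputable def eExp {Ω : Type*} [MeasurableSpace Ω] (P : Measure Ω)
    (X : Ω → EReal) : EReal :=
  ((∫⁻ ω, posE (X ω) ∂P : ENNReal) : EReal)
    - ((∫⁻ ω, posE (-(X ω)) ∂P : ENNReal) : EReal)

/-!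
The bounded, continuous, strictly decreasing transform `φ x = (1 + exp x)⁻¹` turns the
essential infimum into a maximisation problem with finite value `s = ⨆ J ∈ 𝒥, ∫ φ ∘ J`. By
directedness, members of `𝒥` whose `φ`-integrals approach `s` can be arranged into an a.s.
nonincreasing sequence with infimum `h`, and `∫ φ ∘ h ≥ s`. For `J ∈ 𝒥`, every `min (Js n) J`
lies a.s. above a member of `𝒥`, so monotone convergence gives `∫ φ ∘ min h J ≤ s`; the functions
`φ ∘ min h J ≥ φ ∘ h` thus have the same finite integral and agree a.s., i.e. `h ≤ J` a.s.
The expectation passes to the limit by monotone convergence for the negative parts and by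
dominated convergence, with bound `J₀⁺`, for the positive parts.
-/

open Topology

-- `posE` is `EReal.toENNReal` by definition.
lemma posE_mono : Monotone posE := fun _ _ h => EReal.toENNReal_le_toENNReal h

lemma continuous_posE : Continuous posE := EReal.continuous_toENNReal

lemma measurable_posE : Measurable posE := measurable_ereal_toENNReal

section eExp

variable {Ω : Type*} [MeasurableSpace Ω] {P : Measure Ω}

lemma eExp_mono_ae {f g : Ω → EReal} (h : f ≤ᵐ[P] g) : eExp P f ≤ eExp P g :=
  EReal.sub_le_sub
    (EReal.coe_ennreal_le_coe_ennreal_iff.mpr <| lintegral_mono_ae <|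
      h.mono fun _ hω => posE_mono hω)
    (EReal.coe_ennreal_le_coe_ennreal_iff.mpr <| lintegral_mono_ae <|
      h.mono fun _ hω => posE_mono (EReal.neg_le_neg_iff.mpr hω))

lemma lintegral_posE_ne_top_of_eExp_lt_top {X : Ω → EReal}
    (hneg : ∫⁻ ω, posE (-(X ω)) ∂P ≠ ⊤) (hX : eExp P X < ⊤) : ∫⁻ ω, posE (X ω) ∂P ≠ ⊤ := by
  intro htop
  rw [eExp, htop, EReal.coe_ennreal_top, EReal.top_sub (by simpa using hneg)] at hX
  exact hX.ne rfl

lemma tendsto_eExp_of_ae_antitone {f : ℕ → Ω → EReal} {g : Ω → EReal}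
    (hf : ∀ n, Measurable (f n)) (hanti : ∀ᵐ ω ∂P, Antitone (f · ω))
    (hlim : ∀ᵐ ω ∂P, Tendsto (f · ω) atTop (𝓝 (g ω)))
    (hfin : ∫⁻ ω, posE (f 0 ω) ∂P ≠ ⊤) :
    Tendsto (fun n => eExp P (f n)) atTop (𝓝 (eExp P g)) := by
  have hpos : Tendsto (fun n => ∫⁻ ω, posE (f n ω) ∂P) atTop (𝓝 (∫⁻ ω, posE (g ω) ∂P)) :=
    tendsto_lintegral_of_dominated_convergence _ (fun n => measurable_posE.comp (hf n))
      (fun n => hanti.mono fun _ hω => posE_mono (hω n.zero_le)) hfin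
      (hlim.mono fun _ hω => (continuous_posE.tendsto _).comp hω)
  have hneg : Tendsto (fun n => ∫⁻ ω, posE (-(f n ω)) ∂P) atTop
      (𝓝 (∫⁻ ω, posE (-(g ω)) ∂P)) :=
    lintegral_tendsto_of_tendsto_of_monotone
      (fun n => (measurable_posE.comp (hf n).neg).aemeasurable)
      (hanti.mono fun _ hω _ _ hij => posE_mono (EReal.neg_le_neg_iff.mpr (hω hij)))
      (hlim.mono fun _ hω => ((continuous_posE.comp continuous_neg).tendsto _).comp hω)
  have hg_fin : ∫⁻ ω, posE (g ω) ∂P ≠ ⊤ :=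
    ne_top_of_le_ne_top hfin <| le_of_tendsto' hpos fun n =>
      lintegral_mono_ae (hanti.mono fun _ hω => posE_mono (hω n.zero_le))
  simp only [eExp, sub_eq_add_neg]
  exact (EReal.continuousAt_add (.inl (by simpa using hg_fin))
    (.inl (EReal.coe_ennreal_ne_bot _))).tendsto.comp
    ((EReal.tendsto_coe_ennreal.mpr hpos).prodMk_nhds (EReal.tendsto_coe_ennreal.mpr hneg).neg)

end eExp

noncomputable def negSigmoid (x : EReal) : ENNReal := (1 + EReal.exp x)⁻¹

lemma negSigmoid_le_one (x : EReal) : negSigmoid x ≤ 1 :=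
  ENNReal.inv_le_one.mpr le_self_add

lemma continuous_negSigmoid : Continuous negSigmoid :=
  continuous_inv.comp (continuous_const.add ENNReal.continuous_exp)

lemma strictAnti_negSigmoid : StrictAnti negSigmoid := fun _ _ hxy =>
  ENNReal.inv_lt_inv.mpr (ENNReal.add_lt_add_left ENNReal.one_ne_top (EReal.exp_strictMono hxy))

section essInf

variable {Ω : Type*} [MeasurableSpace Ω] {P : Measure Ω}

lemma exists_seq_mem_ae_le_min {α : Type*} [LinearOrder α] {𝒥 : Set (Ω → α)}
    (hdir : ∀ J₁ ∈ 𝒥, ∀ J₂ ∈ 𝒥, ∃ J₃ ∈ 𝒥, ∀ᵐ ω ∂P, J₃ ω ≤ min (J₁ ω) (J₂ ω))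
    {J₀ : Ω → α} (hJ₀ : J₀ ∈ 𝒥) {K : ℕ → Ω → α} (hK : ∀ n, K n ∈ 𝒥) :
    ∃ Js : ℕ → Ω → α, (∀ n, Js n ∈ 𝒥) ∧ Js 0 = J₀ ∧
      ∀ n, ∀ᵐ ω ∂P, Js (n + 1) ω ≤ min (Js n ω) (K n ω) := by
  choose next hnext_mem hnext_le using fun (J : 𝒥) n => hdir J.1 J.2 (K n) (hK n)
  let Js : ℕ → 𝒥 := fun n => Nat.rec ⟨J₀, hJ₀⟩ (fun n J => ⟨next J n, hnext_mem J n⟩) n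
  exact ⟨fun n => (Js n).1, fun n => (Js n).2, rfl, fun n => hnext_le (Js n) n⟩

variable {𝒥 : Set (Ω → EReal)}

lemma lintegral_negSigmoid_iInf_le_iSup {G : ℕ → Ω → EReal} (hG : ∀ n, Measurable (G n))
    (hanti : ∀ᵐ ω ∂P, Antitone (G · ω)) (hbelow : ∀ n, ∃ L ∈ 𝒥, L ≤ᵐ[P] G n) :
    ∫⁻ ω, negSigmoid (⨅ n, G n ω) ∂P ≤ ⨆ J ∈ 𝒥, ∫⁻ ω, negSigmoid (J ω) ∂P := by
  have hlim : Tendsto (fun n => ∫⁻ ω, negSigmoid (G n ω) ∂P) atTop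
      (𝓝 (∫⁻ ω, negSigmoid (⨅ n, G n ω) ∂P)) :=
    lintegral_tendsto_of_tendsto_of_monotone
      (fun n => (continuous_negSigmoid.measurable.comp (hG n)).aemeasurable)
      (hanti.mono fun _ hω _ _ hij => strictAnti_negSigmoid.antitone (hω hij))
      (hanti.mono fun _ hω => (continuous_negSigmoid.tendsto _).comp (tendsto_atTop_iInf hω))
  refine le_of_tendsto' hlim fun n => ?_
  obtain ⟨L, hL, hLG⟩ := hbelow n
  refine le_iSup₂_of_le L hL ?_
  exact lintegral_mono_ae (hLG.mono fun _ hω => strictAnti_negSigmoid.antitone hω)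

lemma exists_seq_ae_antitone_maximizing
    (hdir : ∀ J₁ ∈ 𝒥, ∀ J₂ ∈ 𝒥, ∃ J₃ ∈ 𝒥, ∀ᵐ ω ∂P, J₃ ω ≤ min (J₁ ω) (J₂ ω))
    {J₀ : Ω → EReal} (hJ₀ : J₀ ∈ 𝒥) :
    ∃ Js : ℕ → Ω → EReal, (∀ n, Js n ∈ 𝒥) ∧ Js 0 = J₀ ∧ (∀ᵐ ω ∂P, Antitone (Js · ω)) ∧
      ⨆ J ∈ 𝒥, ∫⁻ ω, negSigmoid (J ω) ∂P ≤ ∫⁻ ω, negSigmoid (⨅ n, Js n ω) ∂P := by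
  obtain ⟨u, -, hu_lim, hu_mem⟩ := exists_seq_tendsto_sSup
    (Set.Nonempty.image (fun J => ∫⁻ ω, negSigmoid (J ω) ∂P) ⟨J₀, hJ₀⟩) (OrderTop.bddAbove _)
  choose K hK hKu using hu_mem
  obtain ⟨Js, hJs, hJs0, hstep⟩ := exists_seq_mem_ae_le_min hdir hJ₀ hK
  refine ⟨Js, hJs, hJs0, ?_, ?_⟩
  · filter_upwards [ae_all_iff.mpr hstep] with ω hω
    exact antitone_nat_of_succ_le fun n => (hω n).trans (min_le_left _ _)
  · rw [← sSup_image]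
    refine le_of_tendsto' hu_lim fun n => ?_
    rw [← hKu n]
    refine lintegral_mono_ae ((hstep n).mono fun ω hω => strictAnti_negSigmoid.antitone ?_)
    exact (iInf_le _ (n + 1)).trans (hω.trans (min_le_right _ _))

lemma ae_iInf_le_of_maximizing [IsFiniteMeasure P] (hmeas : ∀ J ∈ 𝒥, Measurable J)
    (hdir : ∀ J₁ ∈ 𝒥, ∀ J₂ ∈ 𝒥, ∃ J₃ ∈ 𝒥, ∀ᵐ ω ∂P, J₃ ω ≤ min (J₁ ω) (J₂ ω))
    {Js : ℕ → Ω → EReal} (hJs : ∀ n, Js n ∈ 𝒥) (hanti : ∀ᵐ ω ∂P, Antitone (Js · ω))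
    (hmax : ⨆ J ∈ 𝒥, ∫⁻ ω, negSigmoid (J ω) ∂P ≤ ∫⁻ ω, negSigmoid (⨅ n, Js n ω) ∂P) :
    ∀ J ∈ 𝒥, ∀ᵐ ω ∂P, ⨅ n, Js n ω ≤ J ω := by
  intro J hJ
  set h := fun ω => ⨅ n, Js n ω
  have hle : ∫⁻ ω, negSigmoid (min (h ω) (J ω)) ∂P ≤ ∫⁻ ω, negSigmoid (h ω) ∂P :=
    calc ∫⁻ ω, negSigmoid (min (h ω) (J ω)) ∂P
        = ∫⁻ ω, negSigmoid (⨅ n, min (Js n ω) (J ω)) ∂P :=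
          lintegral_congr fun ω => congrArg negSigmoid iInf_inf
      _ ≤ ⨆ J ∈ 𝒥, ∫⁻ ω, negSigmoid (J ω) ∂P :=
        lintegral_negSigmoid_iInf_le_iSup (fun n => (hmeas _ (hJs n)).min (hmeas J hJ))
          (hanti.mono fun _ hω _ _ hij => min_le_min_right _ (hω hij))
          fun n => hdir _ (hJs n) J hJ
      _ ≤ ∫⁻ ω, negSigmoid (h ω) ∂P := hmax
  have hfin : ∫⁻ ω, negSigmoid (h ω) ∂P ≠ ⊤ :=
    ne_top_of_le_ne_top (measure_ne_top P Set.univ)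
      ((lintegral_mono fun ω => negSigmoid_le_one _).trans_eq (lintegral_one))
  have heq := ae_eq_of_ae_le_of_lintegral_le
    (Eventually.of_forall fun ω => strictAnti_negSigmoid.antitone (min_le_left (h ω) (J ω))) hfin
    (continuous_negSigmoid.measurable.comp
      ((Measurable.iInf fun n => hmeas _ (hJs n)).min (hmeas J hJ))).aemeasurable hle
  exact heq.mono fun ω hω => min_eq_left_iff.mp (strictAnti_negSigmoid.injective hω).symm

end essInf

theorem statement1_general {Ω : Type*} [MeasurableSpace Ω]
    (P : Measure Ω) [IsProbabilityMeasure P]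
    (𝒥 : Set (Ω → EReal))
    (hmeas : ∀ J ∈ 𝒥, Measurable J)
    (hdir : ∀ J₁ ∈ 𝒥, ∀ J₂ ∈ 𝒥, ∃ J₃ ∈ 𝒥, ∀ᵐ ω ∂P, J₃ ω ≤ min (J₁ ω) (J₂ ω))
    (hneg : ∀ J ∈ 𝒥, ∫⁻ ω, posE (-(J ω)) ∂P < ⊤)
    (hfin : ∃ J₀ ∈ 𝒥, eExp P J₀ < ⊤) :
    ∃ (Js : ℕ → Ω → EReal) (h : Ω → EReal),
      (∀ n, Js n ∈ 𝒥) ∧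
      (∀ᵐ ω ∂P, ∀ n, Js (n + 1) ω ≤ Js n ω) ∧
      (∀ᵐ ω ∂P, Tendsto (fun n => Js n ω) atTop (nhds (h ω))) ∧
      (∀ J ∈ 𝒥, ∀ᵐ ω ∂P, h ω ≤ J ω) ∧
      (∀ h' : Ω → EReal, Measurable h' →
        (∀ J ∈ 𝒥, ∀ᵐ ω ∂P, h' ω ≤ J ω) → ∀ᵐ ω ∂P, h' ω ≤ h ω) ∧
      eExp P h = ⨅ J ∈ 𝒥, eExp P J := by
  obtain ⟨J₀, hJ₀, hJ₀fin⟩ := hfin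
  obtain ⟨Js, hJs, hJs0, hanti, hmax⟩ := exists_seq_ae_antitone_maximizing hdir hJ₀
  have hlim : ∀ᵐ ω ∂P, Tendsto (Js · ω) atTop (𝓝 (⨅ n, Js n ω)) :=
    hanti.mono fun _ hω => tendsto_atTop_iInf hω
  have hlower := ae_iInf_le_of_maximizing hmeas hdir hJs hanti hmax
  have hexp := tendsto_eExp_of_ae_antitone (fun n => hmeas _ (hJs n)) hanti hlim
    (hJs0 ▸ lintegral_posE_ne_top_of_eExp_lt_top (hneg J₀ hJ₀).ne hJ₀fin)
  refine ⟨Js, fun ω => ⨅ n, Js n ω, hJs, hanti.mono fun _ hω n => hω n.le_succ, hlim,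
    hlower, fun h' _ hh' => ?_, ?_⟩
  · filter_upwards [ae_all_iff.mpr fun n => hh' _ (hJs n)] with ω hω using le_iInf hω
  · refine le_antisymm (le_iInf₂ fun J hJ => eExp_mono_ae (hlower J hJ)) ?_
    exact ge_of_tendsto hexp (Eventually.of_forall fun n => iInf₂_le (Js n) (hJs n))

/-- A nonempty downward-directed family `𝒥` of measurable functions
`Ω → (−∞,∞]`, each with integrable negative part and containing a member of finite
expectation, admits a `P`-a.s. nonincreasing sequence whose a.s. pointwise limit `h`
is the essential infimum of `𝒥` and satisfies `E_P[h] = inf_{J ∈ 𝒥} E_P[J]`. -/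
theorem statement1 {Ω : Type*} [MeasurableSpace Ω]
    (P : Measure Ω) [IsProbabilityMeasure P]
    (𝒥 : Set (Ω → EReal)) (h𝒥ne : 𝒥.Nonempty)
    (hmeas : ∀ J ∈ 𝒥, Measurable J)
    (hnobot : ∀ J ∈ 𝒥, ∀ ω, J ω ≠ ⊥)
    (hdir : ∀ J₁ ∈ 𝒥, ∀ J₂ ∈ 𝒥, ∃ J₃ ∈ 𝒥, ∀ᵐ ω ∂P, J₃ ω ≤ min (J₁ ω) (J₂ ω))
    (hneg : ∀ J ∈ 𝒥, ∫⁻ ω, posE (-(J ω)) ∂P < ⊤)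
    (hfin : ∃ J₀ ∈ 𝒥, eExp P J₀ < ⊤) :
    ∃ (Js : ℕ → Ω → EReal) (h : Ω → EReal),
      (∀ n, Js n ∈ 𝒥) ∧
      (∀ᵐ ω ∂P, ∀ n, Js (n + 1) ω ≤ Js n ω) ∧
      (∀ᵐ ω ∂P, Tendsto (fun n => Js n ω) atTop (nhds (h ω))) ∧
      (∀ J ∈ 𝒥, ∀ᵐ ω ∂P, h ω ≤ J ω) ∧
      (∀ h' : Ω → EReal, Measurable h' →
        (∀ J ∈ 𝒥, ∀ᵐ ω ∂P, h' ω ≤ J ω) → ∀ᵐ ω ∂P, h' ω ≤ h ω) ∧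
      eExp P h = ⨅ J ∈ 𝒥, eExp P J :=
  statement1_general P 𝒥 hmeas hdir hneg hfin
end

section
/- Let (Z_n) be a sequence of nonnegative 𝓕-measurable functions converging P-a.s. to Z, and let b: Ω → [0,∞) be measurable such that the family {Z_n·b : n ∈ ℕ} is uniformly integrable (in particular each Z_n·b ∈ L¹(P)). Let h: Ω → ℝ be measurable with h ≥ −b P-a.s. Then Z·b ∈ L¹(P), each expectation E_P[Z_n·h] and E_P[Z·h] is well defined with values in (−∞,∞] (since (Z_n h)⁻ ≤ Z_n b and (Zh)⁻ ≤ Zb), and liminf_{n→∞} E_P[Z_n·h] ≥ E_P[Z·h]. -/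
open MeasureTheory Filter

/-- The extended expectation `E_P[g] ∈ [−∞,∞]` of a real random variable `g`:
the lintegral of the positive part minus the lintegral of the negative part. -/
noncomputable def eInt {Ω : Type*} [MeasurableSpace Ω] (P : Measure Ω) (g : Ω → ℝ) :
    EReal :=
  ((∫⁻ ω, ENNReal.ofReal (g ω) ∂P : ENNReal) : EReal)
    - ((∫⁻ ω, ENNReal.ofReal (-(g ω)) ∂P : ENNReal) : EReal)

/-! Since `h ≥ -b`, each `Z_n h` splits as `Z_n (h + b) - Z_n b` with `Z_n (h + b) ≥ 0`, and
`(Z_n h)⁻ ≤ Z_n b` makes every negative part finite. Fatou's lemma bounds the nonnegative parts,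
while uniform integrability of `(Z_n b)` gives, by Vitali's theorem, `Z b ∈ L¹` and
`E[Z_n b] → E[Z b]`. -/

open scoped ENNReal Topology

lemma ENNReal.ofReal_add_ofReal_eq_ofReal_add_add_ofReal_neg {x y : ℝ} (hy : 0 ≤ y)
    (hxy : -y ≤ x) :
    ENNReal.ofReal x + ENNReal.ofReal y = ENNReal.ofReal (x + y) + ENNReal.ofReal (-x) := by
  rcases le_total 0 x with hx | hx
  · rw [ENNReal.ofReal_of_nonpos (neg_nonpos.2 hx), add_zero, ENNReal.ofReal_add hx hy]
  · rw [ENNReal.ofReal_of_nonpos hx, zero_add, ← ENNReal.ofReal_add (by linarith) (by linarith)]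
    congr 1
    ring

lemma EReal.coe_ennreal_sub_eq_of_add_eq {p q a : ℝ≥0∞} {c : ℝ} (hq : q ≠ ⊤)
    (h : (p : EReal) + c = a + q) : (p : EReal) - q = a - c := by
  lift q to NNReal using hq
  have hq_coe : ((q : ℝ≥0∞) : EReal) = ((q : ℝ) : EReal) := rfl
  rw [hq_coe] at h ⊢
  calc (p : EReal) - (q : ℝ) = (p + c) - c - (q : ℝ) := by rw [EReal.add_sub_cancel_right]
    _ = (a + (q : ℝ)) - (q : ℝ) - c := by rw [h]; simp only [sub_eq_add_neg, add_right_comm]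
    _ = a - c := by rw [EReal.add_sub_cancel_right]

section

variable {α : Type*} [MeasurableSpace α] {μ : Measure α}

lemma lintegral_ofReal_neg_lt_top_of_neg_le {g w : α → ℝ} (hw : Integrable w μ)
    (hgw : ∀ᵐ x ∂μ, -w x ≤ g x) : ∫⁻ x, ENNReal.ofReal (-g x) ∂μ < ∞ :=
  (lintegral_mono_ae (hgw.mono fun _ hx => ENNReal.ofReal_le_ofReal (by linarith))).trans_lt
    hw.lintegral_lt_top

lemma eInt_eq_lintegral_ofReal_add_sub_integral {g w : α → ℝ} (hg : AEMeasurable g μ)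
    (hw : Integrable w μ) (hw₀ : 0 ≤ᵐ[μ] w) (hgw : ∀ᵐ x ∂μ, -w x ≤ g x) :
    eInt μ g =
      ((∫⁻ x, ENNReal.ofReal (g x + w x) ∂μ : ℝ≥0∞) : EReal) - ((∫ x, w x ∂μ : ℝ) : EReal) := by
  have hsplit : ∫⁻ x, ENNReal.ofReal (g x) ∂μ + ENNReal.ofReal (∫ x, w x ∂μ)
      = ∫⁻ x, ENNReal.ofReal (g x + w x) ∂μ + ∫⁻ x, ENNReal.ofReal (-g x) ∂μ := by
    rw [ofReal_integral_eq_lintegral_ofReal hw hw₀, ← lintegral_add_left' hg.ennreal_ofReal,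
      ← lintegral_add_left' (f := fun x => ENNReal.ofReal (g x + w x))
        (hg.add hw.aemeasurable).ennreal_ofReal]
    refine lintegral_congr_ae ?_
    filter_upwards [hw₀, hgw] with x hx₀ hx
    exact ENNReal.ofReal_add_ofReal_eq_ofReal_add_add_ofReal_neg hx₀ hx
  refine EReal.coe_ennreal_sub_eq_of_add_eq (lintegral_ofReal_neg_lt_top_of_neg_le hw hgw).ne ?_
  rw [← EReal.coe_ennreal_add, ← hsplit, EReal.coe_ennreal_add, EReal.coe_ennreal_ofReal,
    max_eq_left (integral_nonneg_of_ae hw₀)]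

lemma uniformIntegrable_of_tendsto_iSup_setLIntegral [IsFiniteMeasure μ] {ι : Type*}
    {f : ι → α → ℝ} (hf : ∀ i, Measurable (f i))
    (h : Tendsto (fun c : ℝ => ⨆ i, ∫⁻ x in {x | c < |f i x|}, ENNReal.ofReal |f i x| ∂μ)
      atTop (𝓝 0)) :
    UniformIntegrable f 1 μ := by
  refine uniformIntegrable_of le_rfl ENNReal.one_ne_top (fun i => (hf i).aestronglyMeasurable)
    fun ε hε => ?_
  obtain ⟨c, hc⟩ := (h.eventually_lt_const (ENNReal.ofReal_pos.2 hε)).exists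
  refine ⟨(c + 1).toNNReal, fun i => ?_⟩
  have hsub : {x | (c + 1).toNNReal ≤ ‖f i x‖₊} ⊆ {x | c < |f i x|} := fun x hx => by
    have : c + 1 ≤ |f i x| := Real.toNNReal_le_iff_le_coe.1 hx
    show c < |f i x|
    linarith
  rw [eLpNorm_one_eq_lintegral_enorm]
  calc ∫⁻ x, ‖{x | (c + 1).toNNReal ≤ ‖f i x‖₊}.indicator (f i) x‖ₑ ∂μ
      ≤ ∫⁻ x, {x | c < |f i x|}.indicator (fun x => ENNReal.ofReal |f i x|) x ∂μ := by
        refine lintegral_mono fun x => ?_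
        rw [enorm_indicator_eq_indicator_enorm]
        simp only [Real.enorm_eq_ofReal_abs]
        exact Set.indicator_le_indicator_of_subset hsub (fun _ => zero_le) x
    _ = ∫⁻ x in {x | c < |f i x|}, ENNReal.ofReal |f i x| ∂μ :=
        lintegral_indicator (measurableSet_lt measurable_const (hf i).abs) _
    _ ≤ ⨆ i, ∫⁻ x in {x | c < |f i x|}, ENNReal.ofReal |f i x| ∂μ :=
        le_iSup (fun i => ∫⁻ x in {x | c < |f i x|}, ENNReal.ofReal |f i x| ∂μ) i
    _ ≤ ENNReal.ofReal ε := hc.le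

lemma MeasureTheory.UniformIntegrable.tendsto_integral_of_ae_tendsto [IsFiniteMeasure μ]
    {f : ℕ → α → ℝ} {g : α → ℝ} (hf : UniformIntegrable f 1 μ)
    (hfg : ∀ᵐ x ∂μ, Tendsto (fun n => f n x) atTop (𝓝 (g x))) :
    Tendsto (fun n => ∫ x, f n x ∂μ) atTop (𝓝 (∫ x, g x ∂μ)) := by
  have hg : Integrable g μ := hf.integrable_of_ae_tendsto hfg
  refine tendsto_integral_of_L1' g hg.aestronglyMeasurable
    (Eventually.of_forall fun n => memLp_one_iff_integrable.1 (hf.memLp n)) ?_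
  exact tendsto_Lp_finite_of_tendsto_ae le_rfl ENNReal.one_ne_top hf.1
    (memLp_one_iff_integrable.2 hg) hf.2.1 hfg

lemma lintegral_ofReal_le_liminf_of_ae_tendsto {f : ℕ → α → ℝ} {g : α → ℝ}
    (hf : ∀ n, Measurable (f n)) (hfg : ∀ᵐ x ∂μ, Tendsto (fun n => f n x) atTop (𝓝 (g x))) :
    ∫⁻ x, ENNReal.ofReal (g x) ∂μ ≤ liminf (fun n => ∫⁻ x, ENNReal.ofReal (f n x) ∂μ) atTop :=
  calc ∫⁻ x, ENNReal.ofReal (g x) ∂μ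
      = ∫⁻ x, liminf (fun n => ENNReal.ofReal (f n x)) atTop ∂μ := by
        refine lintegral_congr_ae ?_
        filter_upwards [hfg] with x hx
        exact ((ENNReal.continuous_ofReal.tendsto _).comp hx).liminf_eq.symm
    _ ≤ _ := lintegral_liminf_le fun n => (hf n).ennreal_ofReal

end

lemma EReal.coe_ennreal_sub_le_liminf_sub {ι : Type*} {l : Filter ι} [l.NeBot] {u : ι → ℝ≥0∞}
    {v : ι → ℝ} {a : ℝ≥0∞} {c : ℝ} (ha : a ≤ liminf u l) (hv : Tendsto v l (𝓝 c)) :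
    (a : EReal) - c ≤ liminf (fun i => (u i : EReal) - v i) l := by
  have hu : (a : EReal) ≤ liminf (fun i => (u i : EReal)) l := by
    have hmap := Monotone.map_liminf_of_continuousAt (F := l)
      (fun _ _ h => EReal.coe_ennreal_le_coe_ennreal_iff.2 h) u
      continuous_coe_ennreal_ereal.continuousAt
    exact (EReal.coe_ennreal_le_coe_ennreal_iff.2 ha).trans_eq hmap
  calc (a : EReal) - c = (a : EReal) + liminf (fun i => -(v i : EReal)) l := by
        rw [(EReal.tendsto_coe.2 hv).neg.liminf_eq, sub_eq_add_neg]
    _ ≤ liminf (fun i => (u i : EReal)) l + liminf (fun i => -(v i : EReal)) l := by gcongr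
    _ ≤ liminf (fun i => (u i : EReal) - v i) l := EReal.le_liminf_add

theorem statement4_general {Ω : Type*} [MeasurableSpace Ω]
    (P : Measure Ω) [IsProbabilityMeasure P]
    (Z : ℕ → Ω → ℝ) (hZmeas : ∀ n, Measurable (Z n)) (hZpos : ∀ n, ∀ ω, 0 ≤ Z n ω)
    (Zlim : Ω → ℝ) (hZlimmeas : Measurable Zlim)
    (hconv : ∀ᵐ ω ∂P, Tendsto (fun n => Z n ω) atTop (nhds (Zlim ω)))
    (b : Ω → ℝ) (hbmeas : Measurable b) (hbpos : ∀ ω, 0 ≤ b ω)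
    (hUI : Tendsto
      (fun c : ℝ => ⨆ n : ℕ,
        ∫⁻ ω in {ω | c < |Z n ω * b ω|}, ENNReal.ofReal |Z n ω * b ω| ∂P)
      atTop (nhds 0))
    (h : Ω → ℝ) (hhmeas : Measurable h) (hhb : ∀ᵐ ω ∂P, -(b ω) ≤ h ω) :
    Integrable (fun ω => Zlim ω * b ω) P ∧
    (∀ n, ∫⁻ ω, ENNReal.ofReal (-(Z n ω * h ω)) ∂P < ⊤) ∧
    (∫⁻ ω, ENNReal.ofReal (-(Zlim ω * h ω)) ∂P < ⊤) ∧
    eInt P (fun ω => Zlim ω * h ω)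
      ≤ liminf (fun n => eInt P (fun ω => Z n ω * h ω)) atTop := by
  have hZb : UniformIntegrable (fun n ω => Z n ω * b ω) 1 P :=
    uniformIntegrable_of_tendsto_iSup_setLIntegral (fun n => (hZmeas n).mul hbmeas) hUI
  have hZb_int (n : ℕ) : Integrable (fun ω => Z n ω * b ω) P :=
    memLp_one_iff_integrable.1 (hZb.memLp n)
  have hZb_tendsto : ∀ᵐ ω ∂P, Tendsto (fun n => Z n ω * b ω) atTop (𝓝 (Zlim ω * b ω)) :=
    hconv.mono fun ω hω => hω.mul_const (b ω)
  have hZlimb_int : Integrable (fun ω => Zlim ω * b ω) P :=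
    hZb.integrable_of_ae_tendsto hZb_tendsto
  have hZlim_nonneg : ∀ᵐ ω ∂P, 0 ≤ Zlim ω :=
    hconv.mono fun ω hω => ge_of_tendsto' hω fun n => hZpos n ω
  have hmul_nonneg {f : Ω → ℝ} (hf : ∀ᵐ ω ∂P, 0 ≤ f ω) : ∀ᵐ ω ∂P, 0 ≤ f ω * b ω :=
    hf.mono fun ω hω => mul_nonneg hω (hbpos ω)
  have hneg_le {f : Ω → ℝ} (hf : ∀ᵐ ω ∂P, 0 ≤ f ω) : ∀ᵐ ω ∂P, -(f ω * b ω) ≤ f ω * h ω := by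
    filter_upwards [hf, hhb] with ω hfω hbω
    nlinarith
  have hZn_nonneg (n : ℕ) : ∀ᵐ ω ∂P, 0 ≤ Z n ω := .of_forall (hZpos n)
  refine ⟨hZlimb_int, fun n => lintegral_ofReal_neg_lt_top_of_neg_le (hZb_int n)
    (hneg_le (hZn_nonneg n)), lintegral_ofReal_neg_lt_top_of_neg_le hZlimb_int
    (hneg_le hZlim_nonneg), ?_⟩
  have hZn_eInt (n : ℕ) := eInt_eq_lintegral_ofReal_add_sub_integral
    (g := fun ω => Z n ω * h ω) ((hZmeas n).mul hhmeas).aemeasurable (hZb_int n)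
    (hmul_nonneg (hZn_nonneg n)) (hneg_le (hZn_nonneg n))
  rw [eInt_eq_lintegral_ofReal_add_sub_integral (g := fun ω => Zlim ω * h ω)
    (hZlimmeas.mul hhmeas).aemeasurable hZlimb_int
    (hmul_nonneg hZlim_nonneg) (hneg_le hZlim_nonneg)]
  simp only [hZn_eInt]
  refine EReal.coe_ennreal_sub_le_liminf_sub ?_ (hZb.tendsto_integral_of_ae_tendsto hZb_tendsto)
  exact lintegral_ofReal_le_liminf_of_ae_tendsto
    (fun n => ((hZmeas n).mul hhmeas).add ((hZmeas n).mul hbmeas))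
    (hconv.mono fun ω hω => (hω.mul_const (h ω)).add (hω.mul_const (b ω)))

/-- Fatou-type lemma.  If `Z_n ≥ 0` converge `P`-a.s. to `Z`, the family
`{Z_n · b}` is uniformly integrable (each `Z_n·b ∈ L¹(P)`), and `h ≥ −b` `P`-a.s.,
then `Z·b ∈ L¹(P)`, all expectations `E_P[Z_n·h]`, `E_P[Z·h]` are well defined with
values in `(−∞,∞]` (negative parts have finite integral), and
`liminf_n E_P[Z_n·h] ≥ E_P[Z·h]`. -/
theorem statement4 {Ω : Type*} [MeasurableSpace Ω]
    (P : Measure Ω) [IsProbabilityMeasure P]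
    (Z : ℕ → Ω → ℝ) (hZmeas : ∀ n, Measurable (Z n)) (hZpos : ∀ n, ∀ ω, 0 ≤ Z n ω)
    (Zlim : Ω → ℝ) (hZlimmeas : Measurable Zlim)
    (hconv : ∀ᵐ ω ∂P, Tendsto (fun n => Z n ω) atTop (nhds (Zlim ω)))
    (b : Ω → ℝ) (hbmeas : Measurable b) (hbpos : ∀ ω, 0 ≤ b ω)
    (hZbint : ∀ n, Integrable (fun ω => Z n ω * b ω) P)
    (hUI : Tendsto
      (fun c : ℝ => ⨆ n : ℕ,
        ∫⁻ ω in {ω | c < |Z n ω * b ω|}, ENNReal.ofReal |Z n ω * b ω| ∂P)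
      atTop (nhds 0))
    (h : Ω → ℝ) (hhmeas : Measurable h) (hhb : ∀ᵐ ω ∂P, -(b ω) ≤ h ω) :
    Integrable (fun ω => Zlim ω * b ω) P ∧
    (∀ n, ∫⁻ ω, ENNReal.ofReal (-(Z n ω * h ω)) ∂P < ⊤) ∧
    (∫⁻ ω, ENNReal.ofReal (-(Zlim ω * h ω)) ∂P < ⊤) ∧
    eInt P (fun ω => Zlim ω * h ω)
      ≤ liminf (fun n => eInt P (fun ω => Z n ω * h ω)) atTop :=
  statement4_general P Z hZmeas hZpos Zlim hZlimmeas hconv b hbmeas hbpos hUI h hhmeas hhb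
end
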